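/- (Uniqueness, Theorem 2.3.) Let α ∈ (1,2], β ∈ (0,1), ξ ∈ (0,1). Assume f : [0,1] × ℝ × ℝ → ℝ is continuous and there exists k > 0 with |f(t,u,v) − f(t,ū,v̄)| ≤ k(|u−ū| + |v−v̄|) for all t ∈ [0,1] and u, v, ū, v̄ ∈ ℝ. If max{ 2·G*·k, 2k·(Γ(3−α)Γ(α−β+1) + Γ(2−β))/(Γ(3−α)Γ(α−β+1)) } < 1, then there exists exactly one pair (u, v) of continuous functions u, v : [0,1] → ℝ satisfying, for all t ∈ [0,1]: u(t) = ∫₀¹ G(t,s) f(s, u(s), v(s)) ds and v(t) = ∫₀ᵗ f(s, u(s), v(s)) ds − (Γ(2−β) t^{2−α}/(Γ(3−α)Γ(α−β))) ∫₀¹ (1−s)^{α−β−1} f(s, u(s), v(s)) ds. (Equivalently, the boundary value problem ᶜDᵅu(t) = f(t, u(t), ᶜD^{α−1}u(t)), u(0) = ξu(1), ᶜDᵝu(0) = ξ·ᶜDᵝu(1) has a unique solution.) -/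

import Mathlib

open Real MeasureTheory Set

/-- The Green function of the fractional boundary value problem. -/
noncomputable def G (α β ξ : ℝ) (t s : ℝ) : ℝ :=
  if s ≤ t then
    ((1 - ξ) * (t - s) ^ (α - 1) + ξ * (1 - s) ^ (α - 1)) / (Real.Gamma α * (1 - ξ))
      - Real.Gamma (2 - β) * (ξ + (1 - ξ) * t) * (1 - s) ^ (α - β - 1)
          / (Real.Gamma (α - β) * (1 - ξ))
  else
    ξ * (1 - s) ^ (α - 1) / (Real.Gamma α * (1 - ξ))
      - Real.Gamma (2 - β) * (ξ + (1 - ξ) * t) * (1 - s) ^ (α - β - 1)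
          / (Real.Gamma (α - β) * (1 - ξ))

/-- `G* = sup_{t ∈ [0,1]} ∫₀¹ |G(t,s)| ds`. -/
noncomputable def Gstar (α β ξ : ℝ) : ℝ :=
  ⨆ t : Set.Icc (0 : ℝ) 1, ∫ s in (0 : ℝ)..1, |G α β ξ (t : ℝ) s|

/-!
The two integral equations say that `w = (u, v)` is a fixed point, on `[0,1]`, of
`w ↦ (∫₀¹ G(·,s) F_w(s) ds, ᶜD^{α-1} of that)` with `F_w(s) = f(s, u(s), v(s))`. For the sup norm
on `C([0,1], ℝ²)` the Lipschitz bound on `f` makes this map Lipschitz with constant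
`max(2G*k, 2k(1 + Γ(2-β)/(Γ(3-α)Γ(α-β+1))))`, which is `< 1`, so Banach's fixed point theorem
gives the unique solution. The analytic input is that `G(t,s)` is a function continuous on
`[0,1]²` minus a continuous multiple of the integrable weight `(1-s)^{α-β-1}`, whose integral is
`1/(α-β)`; in particular `G*` is finite.
-/

theorem abs_integral_mul_le {K g : ℝ → ℝ} {a b C : ℝ} (hab : a ≤ b)
    (hK : IntervalIntegrable K volume a b) (hg : ∀ s ∈ Icc a b, |g s| ≤ C) :
    |∫ s in a..b, K s * g s| ≤ (∫ s in a..b, |K s|) * C := by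
  rw [← intervalIntegral.integral_mul_const, ← Real.norm_eq_abs]
  refine intervalIntegral.norm_integral_le_of_norm_le hab
    (Filter.Eventually.of_forall fun s hs => ?_) (hK.abs.mul_const C)
  rw [Real.norm_eq_abs, abs_mul]
  exact mul_le_mul_of_nonneg_left (hg s (Ioc_subset_Icc_self hs)) (abs_nonneg _)

theorem continuous_integral_mul_of_continuousOn {A : ℝ → ℝ → ℝ}
    (hA : Continuous (Function.uncurry A)) {φ : ℝ → ℝ} {a b : ℝ} (hab : a ≤ b)
    (hφ : ContinuousOn φ (Icc a b)) : Continuous fun t => ∫ s in a..b, A t s * φ s := by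
  have hφ' : Continuous (IccExtend hab ((Icc a b).domRestrict φ)) :=
    continuous_IccExtend_iff.2 hφ.domRestrict
  have := intervalIntegral.continuous_parametric_intervalIntegral_of_continuous'
    (μ := volume) (f := fun t s => A t s * IccExtend hab ((Icc a b).domRestrict φ) s)
    (hA.mul (hφ'.comp continuous_snd)) a b
  refine this.congr fun t => intervalIntegral.integral_congr fun s hs => ?_
  rw [uIcc_of_le hab] at hs
  simp [IccExtend_of_mem _ _ hs]

theorem intervalIntegrable_one_sub_rpow {r : ℝ} (hr : -1 < r) :
    IntervalIntegrable (fun s : ℝ => (1 - s) ^ r) volume 0 1 := by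
  simpa using
    ((intervalIntegral.intervalIntegrable_rpow' (a := 0) (b := 1) hr).comp_sub_left 1).symm

theorem integral_one_sub_rpow {r : ℝ} (hr : -1 < r) :
    ∫ s in (0 : ℝ)..1, (1 - s) ^ r = 1 / (r + 1) := by
  rw [intervalIntegral.integral_comp_sub_left (fun s => s ^ r), integral_rpow (Or.inl hr)]
  simp [zero_rpow (by linarith : r + 1 ≠ 0)]

theorem abs_integral_sub_le_of_abs_sub_le {φ ψ : ℝ → ℝ} {a b C t : ℝ}
    (hφ : ContinuousOn φ (Icc a b)) (hψ : ContinuousOn ψ (Icc a b))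
    (hC : ∀ s ∈ Icc a b, |φ s - ψ s| ≤ C) (ht : t ∈ Icc a b) :
    |(∫ s in a..t, φ s) - ∫ s in a..t, ψ s| ≤ C * (t - a) := by
  have hsub : uIcc a t ⊆ Icc a b := by
    rw [uIcc_of_le ht.1]; exact Icc_subset_Icc le_rfl ht.2
  rw [← intervalIntegral.integral_sub (hφ.mono hsub).intervalIntegrable
    (hψ.mono hsub).intervalIntegrable, ← Real.norm_eq_abs, ← abs_of_nonneg (sub_nonneg.2 ht.1)]
  exact intervalIntegral.norm_integral_le_of_norm_le_const fun s hs =>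
    hC s (hsub (uIoc_subset_uIcc hs))

theorem abs_integral_one_sub_rpow_mul_sub_le {φ ψ : ℝ → ℝ} {r C : ℝ} (hr : -1 < r)
    (hφ : ContinuousOn φ (Icc 0 1)) (hψ : ContinuousOn ψ (Icc 0 1))
    (hC : ∀ s ∈ Icc (0 : ℝ) 1, |φ s - ψ s| ≤ C) :
    |(∫ s in (0 : ℝ)..1, (1 - s) ^ r * φ s) - ∫ s in (0 : ℝ)..1, (1 - s) ^ r * ψ s|
      ≤ C / (r + 1) := by
  have hw := intervalIntegrable_one_sub_rpow hr
  rw [← uIcc_of_le zero_le_one] at hφ hψ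
  rw [← intervalIntegral.integral_sub (hw.mul_continuousOn hφ) (hw.mul_continuousOn hψ)]
  simp only [← mul_sub]
  refine (abs_integral_mul_le zero_le_one hw hC).trans_eq ?_
  rw [intervalIntegral.integral_congr fun s hs => abs_of_nonneg (rpow_nonneg
    (by rw [uIcc_of_le zero_le_one] at hs; linarith [hs.2]) _), integral_one_sub_rpow hr]
  ring

section FixedPoint

variable {X E : Type*} [TopologicalSpace X] [NormedAddCommGroup E] [CompleteSpace E]

theorem exists_eqOn_unique_of_contracting {S : Set X} (hS : IsCompact S)
    {Φ : (X → E) → X → E} {K : ℝ} (hK : K < 1)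
    (hΦ_cont : ∀ w, ContinuousOn w S → ContinuousOn (Φ w) S)
    (hΦ_lip : ∀ w w', ContinuousOn w S → ContinuousOn w' S → ∀ d,
      (∀ s ∈ S, ‖w s - w' s‖ ≤ d) → ∀ t ∈ S, ‖Φ w t - Φ w' t‖ ≤ K * d) :
    ∃ w, (ContinuousOn w S ∧ EqOn w (Φ w) S) ∧
      ∀ w', ContinuousOn w' S → EqOn w' (Φ w') S → EqOn w' w S := by
  have : CompactSpace S := isCompact_iff_compactSpace.mp hS
  let extend : C(S, E) → X → E := fun g => Function.extend Subtype.val g 0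
  have restrict_extend (g : C(S, E)) : S.domRestrict (extend g) = g :=
    funext fun x => Subtype.val_injective.extend_apply _ _ x
  have continuousOn_extend (g : C(S, E)) : ContinuousOn (extend g) S := by
    rw [continuousOn_iff_continuous_domRestrict, restrict_extend]
    exact g.continuous
  have eqOn_of_eqOn {w w'} (hw : ContinuousOn w S) (hw' : ContinuousOn w' S) (h : EqOn w w' S) :
      EqOn (Φ w) (Φ w') S := fun t ht => by
    simpa [sub_eq_zero] using hΦ_lip w w' hw hw' 0 (fun s hs => by simp [h hs]) t ht
  let T : C(S, E) → C(S, E) := fun g =>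
    ⟨S.domRestrict (Φ (extend g)), (hΦ_cont _ (continuousOn_extend g)).domRestrict⟩
  have hT : ContractingWith K.toNNReal T := by
    refine ⟨Real.toNNReal_lt_one.2 hK, LipschitzWith.of_dist_le_mul fun g h => ?_⟩
    refine (ContinuousMap.dist_le (by positivity)).2 fun x => ?_
    refine (le_trans ?_ (mul_le_mul_of_nonneg_right (Real.le_coe_toNNReal K) dist_nonneg))
    rw [dist_eq_norm]
    refine hΦ_lip _ _ (continuousOn_extend g) (continuousOn_extend h) _
      (fun s hs => ?_) x x.2
    have := ContinuousMap.dist_apply_le_dist (f := g) (g := h) ⟨s, hs⟩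
    rwa [← restrict_extend g, ← restrict_extend h, dist_eq_norm] at this
  let P := ContractingWith.fixedPoint T hT
  have hP : T P = P := hT.fixedPoint_isFixedPt
  refine ⟨extend P, ⟨continuousOn_extend P, fun t ht => ?_⟩, fun w' hw' hfix t ht => ?_⟩
  · calc extend P t = P ⟨t, ht⟩ := congrFun (restrict_extend P) ⟨t, ht⟩
      _ = T P ⟨t, ht⟩ := by rw [hP]
  · let g : C(S, E) := ⟨S.domRestrict w', hw'.domRestrict⟩
    have hg : T g = g := by
      ext x
      exact (eqOn_of_eqOn (continuousOn_extend g) hw'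
        (fun s hs => congrFun (restrict_extend g) ⟨s, hs⟩) x.2).trans (hfix x.2).symm
    have := congrFun (congrArg DFunLike.coe (hT.fixedPoint_unique hg)) ⟨t, ht⟩
    exact this.trans (congrFun (restrict_extend P) ⟨t, ht⟩).symm

end FixedPoint

section Green

variable {α β ξ : ℝ} {φ ψ : ℝ → ℝ} {C t : ℝ}

noncomputable def greenOperator (α β ξ : ℝ) (φ : ℝ → ℝ) (t : ℝ) : ℝ :=
  ∫ s in (0 : ℝ)..1, G α β ξ t s * φ s

/-- `max (t - s) 0 ^ (α - 1)` vanishes for `s > t` (as `α > 1`), merging the two branches of `G`. -/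
noncomputable def greenRegularPart (α ξ t s : ℝ) : ℝ :=
  ((1 - ξ) * max (t - s) 0 ^ (α - 1) + ξ * (1 - s) ^ (α - 1)) / (Gamma α * (1 - ξ))

noncomputable def greenSingularCoeff (α β ξ t : ℝ) : ℝ :=
  Gamma (2 - β) * (ξ + (1 - ξ) * t) / (Gamma (α - β) * (1 - ξ))

theorem G_eq_sub (hα : 1 < α) (t s : ℝ) :
    G α β ξ t s
      = greenRegularPart α ξ t s - greenSingularCoeff α β ξ t * (1 - s) ^ (α - β - 1) := by
  unfold G greenRegularPart greenSingularCoeff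
  split_ifs with h
  · rw [max_eq_left (sub_nonneg.2 h)]; ring
  · rw [max_eq_right (by linarith), zero_rpow (by linarith)]; ring

theorem continuous_greenRegularPart (hα : 1 < α) :
    Continuous (Function.uncurry (greenRegularPart α ξ)) := by
  unfold greenRegularPart
  have hrpow := continuous_rpow_const (q := α - 1) (by linarith)
  fun_prop

theorem continuous_greenSingularCoeff : Continuous (greenSingularCoeff α β ξ) := by
  unfold greenSingularCoeff
  fun_prop

theorem greenOperator_eq (hα : 1 < α) (hβα : β < α) (hφ : ContinuousOn φ (Icc 0 1)) (t : ℝ) :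
    greenOperator α β ξ φ t = (∫ s in (0 : ℝ)..1, greenRegularPart α ξ t s * φ s)
      - greenSingularCoeff α β ξ t * ∫ s in (0 : ℝ)..1, (1 - s) ^ (α - β - 1) * φ s := by
  rw [← uIcc_of_le zero_le_one] at hφ
  have hA : IntervalIntegrable (fun s => greenRegularPart α ξ t s * φ s) volume 0 1 :=
    (((continuous_greenRegularPart hα).comp (Continuous.prodMk_right t)).intervalIntegrable
      0 1).mul_continuousOn hφ
  have hw := (intervalIntegrable_one_sub_rpow (by linarith : -1 < α - β - 1)).mul_continuousOn hφ
  rw [← intervalIntegral.integral_const_mul, ← intervalIntegral.integral_sub hA (hw.const_mul _)]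
  simp only [greenOperator, G_eq_sub hα]
  congr 1 with s
  ring

theorem intervalIntegrable_G (hα : 1 < α) (hβα : β < α) (t : ℝ) :
    IntervalIntegrable (G α β ξ t) volume 0 1 := by
  simp only [funext (G_eq_sub (β := β) hα t)]
  exact (((continuous_greenRegularPart hα).comp (Continuous.prodMk_right t)).intervalIntegrable
    0 1).sub ((intervalIntegrable_one_sub_rpow (by linarith)).const_mul _)

theorem continuous_greenOperator (hα : 1 < α) (hβα : β < α) (hφ : ContinuousOn φ (Icc 0 1)) :
    Continuous (greenOperator α β ξ φ) := by
  rw [funext (greenOperator_eq hα hβα hφ)]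
  exact (continuous_integral_mul_of_continuousOn (continuous_greenRegularPart hα) zero_le_one
    hφ).sub (continuous_greenSingularCoeff.mul continuous_const)

theorem integral_abs_G_le_Gstar (hα : 1 < α) (hβα : β < α) (ht : t ∈ Icc (0 : ℝ) 1) :
    ∫ s in (0 : ℝ)..1, |G α β ξ t s| ≤ Gstar α β ξ := by
  have hw := intervalIntegrable_one_sub_rpow (by linarith : -1 < α - β - 1)
  -- `Gstar` is a supremum in `ℝ`, so it only bounds integrals that are bounded above.
  set bound : ℝ → ℝ := fun t => (∫ s in (0 : ℝ)..1, |greenRegularPart α ξ t s|)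
    + |greenSingularCoeff α β ξ t| * ∫ s in (0 : ℝ)..1, (1 - s) ^ (α - β - 1)
  have le_bound (t : ℝ) : ∫ s in (0 : ℝ)..1, |G α β ξ t s| ≤ bound t := by
    have hA : Continuous fun s => |greenRegularPart α ξ t s| :=
      ((continuous_greenRegularPart hα).comp (Continuous.prodMk_right t)).abs
    simp only [bound]
    rw [← intervalIntegral.integral_const_mul,
      ← intervalIntegral.integral_add (hA.intervalIntegrable 0 1) (hw.const_mul _)]
    refine intervalIntegral.integral_mono_on zero_le_one (intervalIntegrable_G hα hβα t).abs
      ((hA.intervalIntegrable 0 1).add (hw.const_mul _)) fun s hs => ?_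
    have hws : 0 ≤ (1 - s) ^ (α - β - 1) := rpow_nonneg (by linarith [hs.2]) _
    calc |G α β ξ t s| ≤ |greenRegularPart α ξ t s|
          + |greenSingularCoeff α β ξ t * (1 - s) ^ (α - β - 1)| := by
          rw [G_eq_sub hα]; exact abs_sub _ _
      _ = _ := by rw [abs_mul, abs_of_nonneg hws]
  have hbound : Continuous bound :=
    (intervalIntegral.continuous_parametric_intervalIntegral_of_continuous' (μ := volume)
      (continuous_greenRegularPart hα).abs 0 1).add
      (continuous_greenSingularCoeff.abs.mul continuous_const)
  obtain ⟨M, hM⟩ := (isCompact_Icc (a := (0 : ℝ)) (b := 1)).bddAbove_image hbound.continuousOn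
  refine le_ciSup (f := fun t : Icc (0 : ℝ) 1 => ∫ s in (0 : ℝ)..1, |G α β ξ t s|)
    ⟨M, ?_⟩ ⟨t, ht⟩
  rintro _ ⟨t, rfl⟩
  exact (le_bound t).trans (hM ⟨t, t.2, rfl⟩)

theorem abs_greenOperator_sub_le (hα : 1 < α) (hβα : β < α) (hφ : ContinuousOn φ (Icc 0 1))
    (hψ : ContinuousOn ψ (Icc 0 1)) (hC : ∀ s ∈ Icc (0 : ℝ) 1, |φ s - ψ s| ≤ C)
    (ht : t ∈ Icc (0 : ℝ) 1) :
    |greenOperator α β ξ φ t - greenOperator α β ξ ψ t| ≤ Gstar α β ξ * C := by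
  rw [← uIcc_of_le zero_le_one] at hφ hψ
  have hG := intervalIntegrable_G (ξ := ξ) hα hβα t
  unfold greenOperator
  rw [← intervalIntegral.integral_sub (hG.mul_continuousOn hφ) (hG.mul_continuousOn hψ)]
  simp only [← mul_sub]
  exact (abs_integral_mul_le zero_le_one hG hC).trans (mul_le_mul_of_nonneg_right
    (integral_abs_G_le_Gstar hα hβα ht) ((abs_nonneg _).trans (hC t ht)))

end Green

section DerivGreenOperator

variable {α β : ℝ} {φ ψ : ℝ → ℝ} {C t : ℝ}

/-- `ᶜD^{α-1}` of `greenOperator α β ξ φ`. -/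
noncomputable def derivGreenOperator (α β : ℝ) (φ : ℝ → ℝ) (t : ℝ) : ℝ :=
  (∫ s in (0 : ℝ)..t, φ s)
    - (Gamma (2 - β) * t ^ (2 - α) / (Gamma (3 - α) * Gamma (α - β)))
      * ∫ s in (0 : ℝ)..1, (1 - s) ^ (α - β - 1) * φ s

theorem continuousOn_derivGreenOperator (hα : α ≤ 2) (hφ : ContinuousOn φ (Icc 0 1)) :
    ContinuousOn (derivGreenOperator α β φ) (Icc 0 1) := by
  rw [← uIcc_of_le zero_le_one] at hφ ⊢
  have hprim := intervalIntegral.continuousOn_primitive_interval (μ := volume)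
    hφ.integrableOn_uIcc
  have hpow : ContinuousOn (fun t : ℝ => t ^ (2 - α)) (uIcc 0 1) :=
    continuousOn_id.rpow_const fun _ _ => Or.inr (by linarith)
  exact hprim.sub (((continuousOn_const.mul hpow).div_const _).mul continuousOn_const)

theorem abs_derivGreenOperator_sub_le (hα : α ≤ 2) (hβα : β < α)
    (hφ : ContinuousOn φ (Icc 0 1)) (hψ : ContinuousOn ψ (Icc 0 1))
    (hC : ∀ s ∈ Icc (0 : ℝ) 1, |φ s - ψ s| ≤ C) (ht : t ∈ Icc (0 : ℝ) 1) :
    |derivGreenOperator α β φ t - derivGreenOperator α β ψ t|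
      ≤ (Gamma (3 - α) * Gamma (α - β + 1) + Gamma (2 - β))
          / (Gamma (3 - α) * Gamma (α - β + 1)) * C := by
  have hΓ3α : 0 < Gamma (3 - α) := Gamma_pos_of_pos (by linarith)
  have hΓ2β : 0 < Gamma (2 - β) := Gamma_pos_of_pos (by linarith)
  have hΓαβ : 0 < Gamma (α - β) := Gamma_pos_of_pos (by linarith)
  have hαβ : 0 < α - β := by linarith
  have hC0 : 0 ≤ C := (abs_nonneg _).trans (hC t ht)
  set c := Gamma (2 - β) / (Gamma (3 - α) * Gamma (α - β)) with hc
  set κ := Gamma (2 - β) * t ^ (2 - α) / (Gamma (3 - α) * Gamma (α - β))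
  have hκ0 : 0 ≤ κ := by have := rpow_nonneg ht.1 (2 - α); positivity
  have hκc : κ ≤ c := by
    have := rpow_le_one ht.1 ht.2 (by linarith : 0 ≤ 2 - α)
    exact div_le_div_of_nonneg_right (by nlinarith) (by positivity)
  have hprim : |(∫ s in (0 : ℝ)..t, φ s) - ∫ s in (0 : ℝ)..t, ψ s| ≤ C :=
    (abs_integral_sub_le_of_abs_sub_le hφ hψ hC ht).trans
      (by rw [sub_zero]; exact mul_le_of_le_one_right hC0 ht.2)
  have hweighted := abs_integral_one_sub_rpow_mul_sub_le (by linarith : -1 < α - β - 1) hφ hψ hC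
  rw [sub_add_cancel] at hweighted
  have hconst : (Gamma (3 - α) * Gamma (α - β + 1) + Gamma (2 - β))
      / (Gamma (3 - α) * Gamma (α - β + 1)) * C = C + c * (C / (α - β)) := by
    rw [Gamma_add_one hαβ.ne', hc]
    field_simp
  rw [hconst]
  calc |derivGreenOperator α β φ t - derivGreenOperator α β ψ t|
      = |((∫ s in (0 : ℝ)..t, φ s) - ∫ s in (0 : ℝ)..t, ψ s)
          - κ * ((∫ s in (0 : ℝ)..1, (1 - s) ^ (α - β - 1) * φ s)
            - ∫ s in (0 : ℝ)..1, (1 - s) ^ (α - β - 1) * ψ s)| := by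
        simp only [derivGreenOperator, κ]; congr 1; ring
    _ ≤ C + c * (C / (α - β)) := by
        refine (abs_sub _ _).trans (add_le_add hprim ?_)
        rw [abs_mul, abs_of_nonneg hκ0]
        exact mul_le_mul hκc hweighted (abs_nonneg _) (hκ0.trans hκc)

end DerivGreenOperator

section SolutionOperator

variable {α β ξ k : ℝ} {f : ℝ → ℝ → ℝ → ℝ}

theorem continuousOn_superposition {S : Set ℝ}
    (hf : ContinuousOn (fun q : ℝ × ℝ × ℝ => f q.1 q.2.1 q.2.2) (S ×ˢ univ))
    {w : ℝ → ℝ × ℝ} (hw : ContinuousOn w S) : ContinuousOn (fun s => f s (w s).1 (w s).2) S :=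
  hf.comp (continuousOn_id.prodMk hw) fun _ hs => ⟨hs, trivial⟩

noncomputable def solutionOperator (α β ξ : ℝ) (f : ℝ → ℝ → ℝ → ℝ) (w : ℝ → ℝ × ℝ) (t : ℝ) :
    ℝ × ℝ :=
  (greenOperator α β ξ (fun s => f s (w s).1 (w s).2) t,
    derivGreenOperator α β (fun s => f s (w s).1 (w s).2) t)

theorem continuousOn_solutionOperator (hα1 : 1 < α) (hα2 : α ≤ 2) (hβα : β < α)
    (hf : ContinuousOn (fun q : ℝ × ℝ × ℝ => f q.1 q.2.1 q.2.2) (Icc (0 : ℝ) 1 ×ˢ univ))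
    {w : ℝ → ℝ × ℝ} (hw : ContinuousOn w (Icc 0 1)) :
    ContinuousOn (solutionOperator α β ξ f w) (Icc 0 1) := by
  have hφ := continuousOn_superposition hf hw
  exact (continuous_greenOperator hα1 hβα hφ).continuousOn.prodMk
    (continuousOn_derivGreenOperator hα2 hφ)

theorem norm_solutionOperator_sub_le (hα1 : 1 < α) (hα2 : α ≤ 2) (hβα : β < α) (hk : 0 ≤ k)
    (hf : ContinuousOn (fun q : ℝ × ℝ × ℝ => f q.1 q.2.1 q.2.2) (Icc (0 : ℝ) 1 ×ˢ univ))
    (hlip : ∀ t ∈ Icc (0 : ℝ) 1, ∀ u v u' v' : ℝ,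
      |f t u v - f t u' v'| ≤ k * (|u - u'| + |v - v'|))
    {w w' : ℝ → ℝ × ℝ} (hw : ContinuousOn w (Icc 0 1)) (hw' : ContinuousOn w' (Icc 0 1)) {d : ℝ}
    (hd : ∀ s ∈ Icc (0 : ℝ) 1, ‖w s - w' s‖ ≤ d) {t : ℝ} (ht : t ∈ Icc (0 : ℝ) 1) :
    ‖solutionOperator α β ξ f w t - solutionOperator α β ξ f w' t‖
      ≤ max (2 * Gstar α β ξ * k)
          (2 * k * ((Gamma (3 - α) * Gamma (α - β + 1) + Gamma (2 - β))
            / (Gamma (3 - α) * Gamma (α - β + 1)))) * d := by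
  have hφφ' : ∀ s ∈ Icc (0 : ℝ) 1,
      |f s (w s).1 (w s).2 - f s (w' s).1 (w' s).2| ≤ 2 * k * d := fun s hs => by
    have h1 := (norm_fst_le (w s - w' s)).trans (hd s hs)
    have h2 := (norm_snd_le (w s - w' s)).trans (hd s hs)
    rw [Prod.fst_sub, Real.norm_eq_abs] at h1
    rw [Prod.snd_sub, Real.norm_eq_abs] at h2
    calc _ ≤ k * (|(w s).1 - (w' s).1| + |(w s).2 - (w' s).2|) := hlip s hs _ _ _ _
      _ ≤ k * (d + d) := by gcongr
      _ = 2 * k * d := by ring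
  have hφ := continuousOn_superposition hf hw
  have hφ' := continuousOn_superposition hf hw'
  rw [max_mul_of_nonneg _ _ ((norm_nonneg _).trans (hd t ht)), norm_prod_le_iff]
  constructor
  · exact le_max_of_le_left
      ((abs_greenOperator_sub_le hα1 hβα hφ hφ' hφφ' ht).trans_eq (by ring))
  · exact le_max_of_le_right
      ((abs_derivGreenOperator_sub_le hα2 hβα hφ hφ' hφφ' ht).trans_eq (by ring))

end SolutionOperator

theorem uniqueness_of_solution_general (α β ξ : ℝ) (hα : 1 < α ∧ α ≤ 2) (hβ : 0 < β ∧ β < 1)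
    (f : ℝ → ℝ → ℝ → ℝ)
    (hf : ContinuousOn (fun q : ℝ × ℝ × ℝ => f q.1 q.2.1 q.2.2)
        (Set.Icc (0 : ℝ) 1 ×ˢ (Set.univ : Set (ℝ × ℝ))))
    (k : ℝ)
    (hlip : ∀ t ∈ Set.Icc (0 : ℝ) 1, ∀ u v u' v' : ℝ,
        |f t u v - f t u' v'| ≤ k * (|u - u'| + |v - v'|))
    (hcontr : max (2 * Gstar α β ξ * k)
        (2 * k * ((Real.Gamma (3 - α) * Real.Gamma (α - β + 1) + Real.Gamma (2 - β))
            / (Real.Gamma (3 - α) * Real.Gamma (α - β + 1)))) < 1) :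
    ∃ u v : ℝ → ℝ,
      (ContinuousOn u (Set.Icc 0 1) ∧ ContinuousOn v (Set.Icc 0 1)
        ∧ (∀ t ∈ Set.Icc (0 : ℝ) 1,
            u t = ∫ s in (0 : ℝ)..1, G α β ξ t s * f s (u s) (v s))
        ∧ (∀ t ∈ Set.Icc (0 : ℝ) 1,
            v t = (∫ s in (0 : ℝ)..t, f s (u s) (v s))
              - (Real.Gamma (2 - β) * t ^ (2 - α) / (Real.Gamma (3 - α) * Real.Gamma (α - β)))
                  * (∫ s in (0 : ℝ)..1, (1 - s) ^ (α - β - 1) * f s (u s) (v s))))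
      ∧ ∀ u' v' : ℝ → ℝ,
          (ContinuousOn u' (Set.Icc 0 1) ∧ ContinuousOn v' (Set.Icc 0 1)
            ∧ (∀ t ∈ Set.Icc (0 : ℝ) 1,
                u' t = ∫ s in (0 : ℝ)..1, G α β ξ t s * f s (u' s) (v' s))
            ∧ (∀ t ∈ Set.Icc (0 : ℝ) 1,
                v' t = (∫ s in (0 : ℝ)..t, f s (u' s) (v' s))
                  - (Real.Gamma (2 - β) * t ^ (2 - α)
                        / (Real.Gamma (3 - α) * Real.Gamma (α - β)))
                      * (∫ s in (0 : ℝ)..1, (1 - s) ^ (α - β - 1) * f s (u' s) (v' s)))) →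
          ∀ t ∈ Set.Icc (0 : ℝ) 1, u' t = u t ∧ v' t = v t := by
  have hk : 0 ≤ k := by
    simpa using (abs_nonneg _).trans (hlip 0 ⟨le_rfl, zero_le_one⟩ 1 0 0 0)
  have hβα : β < α := by linarith [hβ.2, hα.1]
  obtain ⟨w, ⟨hw, hw_fix⟩, hw_unique⟩ := exists_eqOn_unique_of_contracting isCompact_Icc hcontr
    (fun _ hw => continuousOn_solutionOperator hα.1 hα.2 hβα hf hw)
    (fun _ _ hw hw' _ hd _ ht => norm_solutionOperator_sub_le hα.1 hα.2 hβα hk hf hlip hw hw' hd ht)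
  refine ⟨fun t => (w t).1, fun t => (w t).2,
    ⟨hw.fst, hw.snd, fun t ht => congrArg Prod.fst (hw_fix ht),
      fun t ht => congrArg Prod.snd (hw_fix ht)⟩, ?_⟩
  rintro u v ⟨hu, hv, hu_fix, hv_fix⟩ t ht
  exact Prod.ext_iff.1 <| hw_unique (fun t => (u t, v t)) (hu.prodMk hv)
    (fun t ht => Prod.ext (hu_fix t ht) (hv_fix t ht)) ht

/-- Uniqueness (Theorem 2.3): under the Lipschitz condition with contraction constant `< 1`,
the BVP `ᶜDᵅu = f(t,u,ᶜD^{α−1}u)`, `u(0)=ξu(1)`, `ᶜDᵝu(0)=ξᶜDᵝu(1)` has a unique solution. -/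
theorem uniqueness_of_solution (α β ξ : ℝ) (hα : 1 < α ∧ α ≤ 2) (hβ : 0 < β ∧ β < 1)
    (hξ : 0 < ξ ∧ ξ < 1) (f : ℝ → ℝ → ℝ → ℝ)
    (hf : ContinuousOn (fun q : ℝ × ℝ × ℝ => f q.1 q.2.1 q.2.2)
        (Set.Icc (0 : ℝ) 1 ×ˢ (Set.univ : Set (ℝ × ℝ))))
    (k : ℝ) (hk : 0 < k)
    (hlip : ∀ t ∈ Set.Icc (0 : ℝ) 1, ∀ u v u' v' : ℝ,
        |f t u v - f t u' v'| ≤ k * (|u - u'| + |v - v'|))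
    (hcontr : max (2 * Gstar α β ξ * k)
        (2 * k * ((Real.Gamma (3 - α) * Real.Gamma (α - β + 1) + Real.Gamma (2 - β))
            / (Real.Gamma (3 - α) * Real.Gamma (α - β + 1)))) < 1) :
    ∃ u v : ℝ → ℝ,
      (ContinuousOn u (Set.Icc 0 1) ∧ ContinuousOn v (Set.Icc 0 1)
        ∧ (∀ t ∈ Set.Icc (0 : ℝ) 1,
            u t = ∫ s in (0 : ℝ)..1, G α β ξ t s * f s (u s) (v s))
        ∧ (∀ t ∈ Set.Icc (0 : ℝ) 1,
            v t = (∫ s in (0 : ℝ)..t, f s (u s) (v s))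
              - (Real.Gamma (2 - β) * t ^ (2 - α) / (Real.Gamma (3 - α) * Real.Gamma (α - β)))
                  * (∫ s in (0 : ℝ)..1, (1 - s) ^ (α - β - 1) * f s (u s) (v s))))
      ∧ ∀ u' v' : ℝ → ℝ,
          (ContinuousOn u' (Set.Icc 0 1) ∧ ContinuousOn v' (Set.Icc 0 1)
            ∧ (∀ t ∈ Set.Icc (0 : ℝ) 1,
                u' t = ∫ s in (0 : ℝ)..1, G α β ξ t s * f s (u' s) (v' s))
            ∧ (∀ t ∈ Set.Icc (0 : ℝ) 1,
                v' t = (∫ s in (0 : ℝ)..t, f s (u' s) (v' s))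
                  - (Real.Gamma (2 - β) * t ^ (2 - α)
                        / (Real.Gamma (3 - α) * Real.Gamma (α - β)))
                      * (∫ s in (0 : ℝ)..1, (1 - s) ^ (α - β - 1) * f s (u' s) (v' s)))) →
          ∀ t ∈ Set.Icc (0 : ℝ) 1, u' t = u t ∧ v' t = v t :=
  uniqueness_of_solution_general α β ξ hα hβ f hf k hlip hcontr
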